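/- A map c : I → U ⊆ ℂⁿ (or ℝⁿ) satisfying the geodesic equations d²cᵏ/dt² + ∑_{i,j} Γᵏᵢⱼ(c(t))·(dcⁱ/dt)(dcʲ/dt) = 0 for all k also satisfies, for every pair k,ℓ, the 'unparametrized geodesic' equations (dc^ℓ/dt)·(d²cᵏ/dt² + ∑ Γᵏᵢⱼ ċⁱċʲ) = (dcᵏ/dt)·(d²c^ℓ/dt² + ∑ Γ^ℓᵢⱼ ċⁱċʲ). Conversely, if c satisfies the unparametrized equations and its velocity is nowhere zero, then there is a reparametrization of c solving the geodesic equations (locally). -/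

import Mathlib

open Metric Set Filter Topology


/-- The geodesic expression `c̈ᵏ + ∑ᵢⱼ Γᵏᵢⱼ(c(t)) ċⁱ ċʲ` of a curve `c` for the
connection with Christoffel symbols `Γ`. -/
noncomputable def geoE (n : ℕ) (Γ : Fin n → Fin n → Fin n → (Fin n → ℝ) → ℝ)
    (c : ℝ → Fin n → ℝ) (k : Fin n) (t : ℝ) : ℝ :=
  deriv (deriv fun s => c s k) t
    + ∑ i, ∑ j, Γ k i j (c t) * deriv (fun s => c s i) t * deriv (fun s => c s j) t

lemma contDiff_deriv_of_two {g : ℝ → ℝ} (hg : ContDiff ℝ 2 g) : ContDiff ℝ 1 (deriv g) := by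
  have h2 : ContDiff ℝ ((1 : ℕ) + 1) g := by exact_mod_cast hg
  exact (contDiff_succ_iff_deriv.mp h2).2.2

lemma comp_deriv_eq (g φ : ℝ → ℝ) (hg : ContDiff ℝ 2 g) (hφ : ContDiff ℝ 2 φ) :
    deriv (fun u => g (φ u)) = fun u => deriv g (φ u) * deriv φ u := by
  funext u
  exact (((hg.differentiable two_ne_zero (φ u)).hasDerivAt).comp u
    ((hφ.differentiable two_ne_zero u).hasDerivAt)).deriv

lemma comp_deriv2 (g φ : ℝ → ℝ) (hg : ContDiff ℝ 2 g) (hφ : ContDiff ℝ 2 φ) (s : ℝ) :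
    deriv (deriv (fun u => g (φ u))) s
      = deriv (deriv g) (φ s) * (deriv φ s)^2 + deriv g (φ s) * deriv (deriv φ) s := by
  rw [comp_deriv_eq g φ hg hφ]
  have h1 : HasDerivAt (fun u => deriv g (φ u)) (deriv (deriv g) (φ s) * deriv φ s) s :=
    (((contDiff_deriv_of_two hg).differentiable one_ne_zero (φ s)).hasDerivAt).comp s
      ((hφ.differentiable two_ne_zero s).hasDerivAt)
  have h2 : HasDerivAt (deriv φ) (deriv (deriv φ) s) s :=
    ((contDiff_deriv_of_two hφ).differentiable one_ne_zero s).hasDerivAt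
  rw [(h1.fun_mul h2).deriv]; ring

lemma geoE_comp (n : ℕ) (Γ : Fin n → Fin n → Fin n → (Fin n → ℝ) → ℝ)
    (c : ℝ → Fin n → ℝ) (hc : ContDiff ℝ 2 c) (φ : ℝ → ℝ) (hφ : ContDiff ℝ 2 φ)
    (k : Fin n) (s : ℝ) :
    geoE n Γ (fun u => c (φ u)) k s
      = (deriv φ s)^2 * geoE n Γ c k (φ s)
        + deriv (fun t => c t k) (φ s) * deriv (deriv φ) s := by
  have hck : ∀ m : Fin n, ContDiff ℝ 2 (fun t => c t m) := fun m => contDiff_pi.mp hc m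
  simp only [geoE]
  rw [comp_deriv2 (fun t => c t k) φ (hck k) hφ s]
  have e1 : ∀ (j : Fin n),
      deriv (fun u => c (φ u) j) = fun u => deriv (fun t => c t j) (φ u) * deriv φ u :=
    fun j => comp_deriv_eq _ _ (hck j) hφ
  simp only [e1]
  rw [mul_add, Finset.mul_sum]
  have : ∀ i : Fin n, ∑ j, Γ k i j (c (φ s)) * (deriv (fun t => c t i) (φ s) * deriv φ s)
        * (deriv (fun t => c t j) (φ s) * deriv φ s)
      = (deriv φ s)^2 * ∑ j, Γ k i j (c (φ s)) * deriv (fun t => c t i) (φ s)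
        * deriv (fun t => c t j) (φ s) := by
    intro i
    rw [Finset.mul_sum]
    exact Finset.sum_congr rfl fun j _ => by ring
  simp only [this]
  ring


/-- A geodesic satisfies the unparametrized geodesic equations
`ċˡ·(c̈ᵏ + Γᵏᵢⱼċⁱċʲ) = ċᵏ·(c̈ˡ + Γˡᵢⱼċⁱċʲ)`; conversely, a curve satisfying them with
nowhere-vanishing velocity admits, locally, a reparametrization solving the geodesic
equations. -/
theorem stmt_12 (n : ℕ) (Γ : Fin n → Fin n → Fin n → (Fin n → ℝ) → ℝ)
    (hΓ : ∀ k i j, Continuous (Γ k i j))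
    (I : Set ℝ) (hI : IsOpen I) (c : ℝ → Fin n → ℝ) (hc : ContDiff ℝ 2 c) :
    ((∀ t ∈ I, ∀ k, geoE n Γ c k t = 0) →
      ∀ t ∈ I, ∀ k l : Fin n,
        deriv (fun s => c s l) t * geoE n Γ c k t
          = deriv (fun s => c s k) t * geoE n Γ c l t) ∧
    ((∀ t ∈ I, ∀ k l : Fin n,
        deriv (fun s => c s l) t * geoE n Γ c k t
          = deriv (fun s => c s k) t * geoE n Γ c l t) →
      (∀ t ∈ I, ∃ k, deriv (fun s => c s k) t ≠ 0) →
      ∀ t₀ ∈ I, ∃ ε > (0 : ℝ), ∃ φ : ℝ → ℝ, ContDiff ℝ 2 φ ∧ φ 0 = t₀ ∧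
        (∀ s ∈ Metric.ball (0 : ℝ) ε, φ s ∈ I ∧ deriv φ s ≠ 0) ∧
        (∀ s ∈ Metric.ball (0 : ℝ) ε, ∀ k, geoE n Γ (fun u => c (φ u)) k s = 0)) := by
  constructor
  · intro h t ht k l
    rw [h t ht k, h t ht l, mul_zero, mul_zero]
  · intro h1 h2 t₀ ht₀
    obtain ⟨k₀, hk₀⟩ := h2 t₀ ht₀
    have hck : ∀ m : Fin n, ContDiff ℝ 2 (fun t => c t m) := fun m => contDiff_pi.mp hc m
    have hcd : ∀ m : Fin n, Continuous (deriv (fun t => c t m)) :=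
      fun m => (contDiff_deriv_of_two (hck m)).continuous
    have hcd2 : ∀ m : Fin n, Continuous (deriv (deriv (fun t => c t m))) :=
      fun m => (contDiff_deriv_of_two (hck m)).continuous_deriv le_rfl
    have hgeo : ∀ m : Fin n, Continuous (geoE n Γ c m) := by
      intro m
      unfold geoE
      exact (hcd2 m).add <| continuous_finset_sum _ fun i _ => continuous_finset_sum _ fun j _ =>
        (((hΓ m i j).comp hc.continuous).mul (hcd i)).mul (hcd j)
    -- find a ball around t₀ inside I where the k₀-velocity is nonzero
    have hopen : IsOpen (I ∩ {t | deriv (fun s => c s k₀) t ≠ 0}) :=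
      hI.inter (isOpen_ne.preimage (hcd k₀))
    obtain ⟨δ, hδpos, hδ⟩ := Metric.isOpen_iff.mp hopen t₀ ⟨ht₀, hk₀⟩
    have hJI : ball t₀ δ ⊆ I := fun t ht => (hδ ht).1
    have hJne : ∀ t ∈ ball t₀ δ, deriv (fun s => c s k₀) t ≠ 0 := fun t ht => (hδ ht).2
    set lam : ℝ → ℝ := fun t => geoE n Γ c k₀ t / deriv (fun s => c s k₀) t with hlam_def
    have hlamJ : ContinuousOn lam (ball t₀ δ) :=
      ((hgeo k₀).continuousOn).div ((hcd k₀).continuousOn) hJne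
    have key : ∀ t ∈ ball t₀ δ, ∀ m, geoE n Γ c m t = lam t * deriv (fun s => c s m) t := by
      intro t ht m
      have hne := hJne t ht
      have h := h1 t (hJI ht) m k₀
      rw [hlam_def]
      field_simp
      linarith [h]
    -- clamp to closedBall t₀ (δ/2)
    set r := δ / 2 with hr
    set pr : ℝ → ℝ := fun t => max (t₀ - r) (min t (t₀ + r)) with hpr_def
    have hpr_cont : Continuous pr := continuous_const.max (continuous_id.min continuous_const)
    have hpr_mem : ∀ t, pr t ∈ closedBall t₀ r := by
      intro t
      rw [Real.closedBall_eq_Icc]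
      constructor
      · exact le_max_left _ _
      · exact max_le (by linarith) (min_le_right _ _)
    have hKJ : closedBall t₀ r ⊆ ball t₀ δ := closedBall_subset_ball (by linarith)
    have hpr_id : ∀ t ∈ closedBall t₀ r, pr t = t := by
      intro t ht
      rw [Real.closedBall_eq_Icc] at ht
      rw [hpr_def]
      simp only
      rw [min_eq_left ht.2, max_eq_right ht.1]
    set lt' : ℝ → ℝ := fun t => lam (pr t) with hlt_def
    have hlt_cont : Continuous lt' :=
      hlamJ.comp_continuous hpr_cont fun t => hKJ (hpr_mem t)
    set Lam : ℝ → ℝ := fun t => ∫ u in t₀..t, lt' u with hLam_def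
    have hLam : ∀ t, HasDerivAt Lam (lt' t) t :=
      fun t => (hlt_cont.integral_hasStrictDerivAt t₀ t).hasDerivAt
    have hLamc : Continuous Lam :=
      continuous_iff_continuousAt.mpr fun t => (hLam t).differentiableAt.continuousAt
    set E : ℝ → ℝ := fun t => Real.exp (Lam t) with hE_def
    have hE : ∀ t, HasDerivAt E (Real.exp (Lam t) * lt' t) t := fun t => (hLam t).exp
    have hEc : Continuous E := Real.continuous_exp.comp hLamc
    set F : ℝ → ℝ := fun t => ∫ u in t₀..t, E u with hF_def
    have hF : ∀ t, HasDerivAt F (E t) t :=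
      fun t => (hEc.integral_hasStrictDerivAt t₀ t).hasDerivAt
    have hFd : Differentiable ℝ F := fun t => (hF t).differentiableAt
    have hF' : deriv F = E := funext fun t => (hF t).deriv
    have hE1 : ContDiff ℝ 1 E := by
      rw [contDiff_one_iff_deriv]
      refine ⟨fun t => (hE t).differentiableAt, ?_⟩
      have : deriv E = fun t => Real.exp (Lam t) * lt' t := funext fun t => (hE t).deriv
      rw [this]
      exact (Real.continuous_exp.comp hLamc).mul hlt_cont
    have hF2 : ContDiff ℝ 2 F := by
      have h2 : ContDiff ℝ ((1 : ℕ) + 1) F := by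
        rw [contDiff_succ_iff_deriv]
        exact ⟨hFd, by simp, by rw [hF']; exact hE1⟩
      exact_mod_cast h2
    have hm : E t₀ ≠ 0 := (Real.exp_pos _).ne'
    have hFt₀ : F t₀ = 0 := by rw [hF_def]; simp
    -- inverse function theorem
    have hS : HasStrictFDerivAt F
        ((ContinuousLinearEquiv.unitsEquivAut ℝ (Units.mk0 (E t₀) hm)) : ℝ →L[ℝ] ℝ) t₀ :=
      hF2.contDiffAt.hasStrictFDerivAt' ((hF t₀).hasFDerivAt_equiv hm) two_ne_zero
    set ψ : ℝ → ℝ := hS.localInverse F _ t₀ with hψ_def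
    have hψc : ContDiffAt ℝ 2 ψ 0 := by
      have := hF2.contDiffAt.to_localInverse (f' := ContinuousLinearEquiv.unitsEquivAut ℝ
        (Units.mk0 (E t₀) hm)) ((hF t₀).hasFDerivAt_equiv hm) two_ne_zero
      rwa [hFt₀] at this
    have hψ0 : ψ 0 = t₀ := by
      have := hS.localInverse_apply_image
      rwa [hFt₀] at this
    have hright : ∀ᶠ y in 𝓝 (0:ℝ), F (ψ y) = y := by
      have := hS.eventually_right_inverse
      rwa [hFt₀] at this
    -- a neighborhood where ψ is C²
    obtain ⟨U, hUnhds, hUsm⟩ := hψc.contDiffOn le_rfl (by norm_num)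
    obtain ⟨ρ, hρpos, hρ⟩ := Metric.mem_nhds_iff.mp hUnhds
    -- bump function
    set χ : ContDiffBump (0:ℝ) := ⟨ρ/3, ρ/2, by positivity, by linarith⟩ with hχ_def
    set φ : ℝ → ℝ := fun s => χ s * ψ s with hφ_def
    have hφsmooth : ContDiff ℝ 2 φ := by
      rw [contDiff_iff_contDiffAt]
      intro x
      by_cases hx : x ∈ ball (0:ℝ) ρ
      · exact (χ.contDiff.contDiffAt).mul
          ((hUsm.mono hρ).contDiffAt (isOpen_ball.mem_nhds hx))
      · have hxn : x ∉ tsupport (χ : ℝ → ℝ) := by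
          rw [χ.tsupport_eq]
          intro hmem
          exact hx (lt_of_le_of_lt (mem_closedBall.mp hmem) (by change dist x 0 ≤ ρ/2 at hmem; show ρ/2 < ρ; linarith))
        have hz : ∀ᶠ y in 𝓝 x, φ y = 0 := by
          filter_upwards [(isClosed_tsupport (χ : ℝ → ℝ)).isOpen_compl.mem_nhds hxn] with y hy
          rw [hφ_def]
          simp only
          rw [image_eq_zero_of_notMem_tsupport hy, zero_mul]
        exact (contDiffAt_const (c := (0:ℝ))).congr_of_eventuallyEq hz
    have hφψ : ∀ s ∈ ball (0:ℝ) (ρ/3), φ s = ψ s := by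
      intro s hs
      rw [hφ_def]
      simp only
      rw [χ.one_of_mem_closedBall (ball_subset_closedBall hs), one_mul]
    have hrpos : (0:ℝ) < r := by rw [hr]; linarith
    have hφ0 : φ 0 = t₀ := by
      rw [hφψ 0 (mem_ball_self (by positivity)), hψ0]
    -- choose ε
    have hev3 : ∀ᶠ s in 𝓝 (0:ℝ), ψ s ∈ ball t₀ r := by
      have : ball t₀ r ∈ 𝓝 (ψ 0) := isOpen_ball.mem_nhds (by rw [hψ0]; exact mem_ball_self hrpos)
      exact hψc.continuousAt.preimage_mem_nhds this
    have hev1 : ∀ᶠ s in 𝓝 (0:ℝ), φ s = ψ s :=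
      eventually_of_mem (ball_mem_nhds _ (by positivity)) hφψ
    obtain ⟨ε, hεpos, hε⟩ := Metric.eventually_nhds_iff_ball.mp (hright.and (hev1.and hev3))
    have hεF : ∀ x ∈ ball (0:ℝ) ε, F (φ x) = x := by
      intro x hx
      rw [(hε x hx).2.1]
      exact (hε x hx).1
    have hεmem : ∀ x ∈ ball (0:ℝ) ε, φ x ∈ closedBall t₀ r := by
      intro x hx
      rw [(hε x hx).2.1]
      exact ball_subset_closedBall (hε x hx).2.2
    have hεJ : ∀ x ∈ ball (0:ℝ) ε, φ x ∈ ball t₀ δ := fun x hx => hKJ (hεmem x hx)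
    -- derivative of φ on the ball
    have hderiv : ∀ s ∈ ball (0:ℝ) ε, deriv φ s = Real.exp (-(Lam (φ s))) := by
      intro s hs
      have hloc : (fun x => F (φ x)) =ᶠ[𝓝 s] id :=
        eventually_of_mem (isOpen_ball.mem_nhds hs) hεF
      have hcomp : HasDerivAt (fun x => F (φ x)) (E (φ s) * deriv φ s) s :=
        (hF (φ s)).comp s (hφsmooth.differentiable two_ne_zero s).hasDerivAt
      have hid : HasDerivAt (fun x => F (φ x)) 1 s :=
        (hasDerivAt_id s).congr_of_eventuallyEq hloc
      have huniq : E (φ s) * deriv φ s = 1 := hcomp.unique hid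
      have hEpos : E (φ s) = Real.exp (Lam (φ s)) := rfl
      rw [Real.exp_neg]
      field_simp [hEpos] at huniq ⊢
      linarith [huniq]
    have hderiv2 : ∀ s ∈ ball (0:ℝ) ε, deriv (deriv φ) s = -(lt' (φ s)) * (deriv φ s)^2 := by
      intro s hs
      have heq : deriv φ =ᶠ[𝓝 s] fun u => Real.exp (-(Lam (φ u))) :=
        eventually_of_mem (isOpen_ball.mem_nhds hs) fun x hx => hderiv x hx
      have hrhs : HasDerivAt (fun u => Real.exp (-(Lam (φ u))))
          (Real.exp (-(Lam (φ s))) * (-(lt' (φ s) * deriv φ s))) s :=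
        (((hLam (φ s)).comp s (hφsmooth.differentiable two_ne_zero s).hasDerivAt).neg).exp
      rw [heq.deriv_eq, hrhs.deriv, ← hderiv s hs]
      ring
    refine ⟨ε, hεpos, φ, hφsmooth, hφ0, ?_, ?_⟩
    · intro s hs
      refine ⟨hJI (hεJ s hs), ?_⟩
      rw [hderiv s hs]
      exact (Real.exp_pos _).ne'
    · intro s hs k
      rw [geoE_comp n Γ c hc φ hφsmooth k s, hderiv2 s hs, key (φ s) (hεJ s hs) k]
      have hltφ : lt' (φ s) = lam (φ s) := by
        rw [hlt_def]
        simp only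
        rw [hpr_id _ (hεmem s hs)]
      rw [hltφ]
      ring
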